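/- arXiv:1409.4351 — 2 statements merged into one kernel-verified Lean document; each statement's English description precedes it below -/
import Mathlib

section
/- Induction step in the pointwise domination algorithm (Lemma on pointwise bound): with the recursive definitions Δ_{P₀}=0, β_Q = 0 if Δ_Q − (∏_i ⟨f_i⟩_Q)γ_Q ≥ 0 and β_Q = 2^{2(k+1)}C_W otherwise (for cubes Q of generation a multiple of m), and Δ_R = Δ_Q + (β_Q − α_R)(∏_i ⟨f_i⟩_Q) for R ∈ 𝒟_m(Q), where γ_Q = max_{R∈𝒟_m(Q)} α_R and the sequence α is finite with ‖α‖_{Car(P₀)}=1, the following pointwise bound holds: 𝒜^{m;0}_{P₀,α} f⃗(x) ≤ Σ_{Q∈𝒟(P₀)} β_Q (∏_{i=1}^k ⟨f_i⟩_Q) 1_Q(x) for all x ∈ P₀. -/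
open MeasureTheory ENNReal Set
noncomputable section

/-- A dyadic cube in `ℝ^d`: generation `gen` (side length `2^{-gen}`) and
position `pos` (lower-left corner `pos * 2^{-gen}`). -/
structure DyadicCube (d : ℕ) where
  gen : ℤ
  pos : Fin d → ℤ

namespace DyadicCube
variable {d : ℕ}

/-- The half-open cube represented by `Q`. -/
def toSet (Q : DyadicCube d) : Set (Fin d → ℝ) :=
  {x | ∀ i, (Q.pos i : ℝ) * (2 : ℝ) ^ (-Q.gen) ≤ x i ∧
        x i < ((Q.pos i : ℝ) + 1) * (2 : ℝ) ^ (-Q.gen)}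

/-- Lebesgue measure of the cube. -/
def vol (Q : DyadicCube d) : ℝ≥0∞ := volume Q.toSet

/-- The dyadic parent of a cube. -/
def parent (Q : DyadicCube d) : DyadicCube d :=
  ⟨Q.gen - 1, fun i => Int.fdiv (Q.pos i) 2⟩

/-- The `m`-th dyadic ancestor of a cube. -/
def ancestor (m : ℕ) (Q : DyadicCube d) : DyadicCube d := parent^[m] Q

/-- `Q.In P`: `Q` is a dyadic subcube of `P`. -/
def In (Q P : DyadicCube d) : Prop := P.gen ≤ Q.gen ∧ Q.toSet ⊆ P.toSet

/-- Average of a nonnegative (extended-real-valued) function over a cube. -/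
def avg (Q : DyadicCube d) (f : (Fin d → ℝ) → ℝ≥0∞) : ℝ≥0∞ :=
  (∫⁻ x in Q.toSet, f x) / Q.vol

/-- Average of a real-valued function over a cube. -/
def avgR (Q : DyadicCube d) (f : (Fin d → ℝ) → ℝ) : ℝ :=
  (∫ x in Q.toSet, f x) / (Q.vol).toReal

/-- `α` is a Carleson sequence on `𝒟(P₀)` with constant `C`. -/
def Carleson (P₀ : DyadicCube d) (α : DyadicCube d → ℝ≥0∞) (C : ℝ≥0∞) : Prop :=
  ∀ P : DyadicCube d, P.In P₀ →
    ∑' Q : {Q : DyadicCube d // Q.In P}, α Q.1 * Q.1.vol ≤ C * P.vol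

/-- Real-valued version of the Carleson condition. -/
def CarlesonR (P₀ : DyadicCube d) (α : DyadicCube d → ℝ) (C : ℝ) : Prop :=
  ∀ P : DyadicCube d, P.In P₀ →
    ∑' Q : {Q : DyadicCube d // Q.In P}, α Q.1 * (Q.1.vol).toReal ≤ C * (P.vol).toReal

/-- `η`-sparse collection of dyadic cubes. -/
def Sparse (η : ℝ≥0∞) (S : Set (DyadicCube d)) : Prop :=
  ∃ E : DyadicCube d → Set (Fin d → ℝ),
    (∀ Q ∈ S, MeasurableSet (E Q) ∧ E Q ⊆ Q.toSet ∧ η * Q.vol ≤ volume (E Q)) ∧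
    S.Pairwise fun Q Q' => Disjoint (E Q) (E Q')

/-- The `k`-linear positive dyadic shift of complexity `m` on `𝒟(P₀)`. -/
def shift (P₀ : DyadicCube d) (α : DyadicCube d → ℝ≥0∞) (m : ℕ) {k : ℕ}
    (f : Fin k → (Fin d → ℝ) → ℝ≥0∞) (x : Fin d → ℝ) : ℝ≥0∞ :=
  ∑' Q : {Q : DyadicCube d // Q.In P₀ ∧ P₀.gen + m ≤ Q.gen},
    α Q.1 * (∏ i, (ancestor m Q.1).avg (f i)) * Q.1.toSet.indicator 1 x

/-- The sliced shift `𝒜^{m;0}_{P,α}`, summing only over generations `jm`, `j ≥ 1`,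
relative to `P`. -/
def slicedShift (P : DyadicCube d) (α : DyadicCube d → ℝ≥0∞) (m : ℕ) {k : ℕ}
    (f : Fin k → (Fin d → ℝ) → ℝ≥0∞) (x : Fin d → ℝ) : ℝ≥0∞ :=
  ∑' Q : {Q : DyadicCube d // Q.In P ∧ ∃ j : ℕ, 1 ≤ j ∧ Q.gen = P.gen + j * m},
    α Q.1 * (∏ i, (ancestor m Q.1).avg (f i)) * Q.1.toSet.indicator 1 x

/-- Real-valued `k`-linear positive dyadic shift of complexity `m`. -/
def shiftR (P₀ : DyadicCube d) (α : DyadicCube d → ℝ) (m : ℕ) {k : ℕ}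
    (f : Fin k → (Fin d → ℝ) → ℝ) (x : Fin d → ℝ) : ℝ :=
  ∑' Q : {Q : DyadicCube d // Q.In P₀ ∧ P₀.gen + m ≤ Q.gen},
    α Q.1 * (∏ i, (ancestor m Q.1).avgR (f i)) * Q.1.toSet.indicator 1 x

/-- Real-valued sliced shift `𝒜^{m;0}_{P,α}`. -/
def slicedShiftR (P : DyadicCube d) (α : DyadicCube d → ℝ) (m : ℕ) {k : ℕ}
    (f : Fin k → (Fin d → ℝ) → ℝ) (x : Fin d → ℝ) : ℝ :=
  ∑' Q : {Q : DyadicCube d // Q.In P ∧ ∃ j : ℕ, 1 ≤ j ∧ Q.gen = P.gen + j * m},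
    α Q.1 * (∏ i, (ancestor m Q.1).avgR (f i)) * Q.1.toSet.indicator 1 x

/-- The positive sparse operator `𝒜⁰_𝒮`. -/
def sparseOp (S : Set (DyadicCube d)) {k : ℕ}
    (f : Fin k → (Fin d → ℝ) → ℝ≥0∞) (x : Fin d → ℝ) : ℝ≥0∞ :=
  ∑' Q : S, (∏ i, (Q : DyadicCube d).avg (f i)) * (Q : DyadicCube d).toSet.indicator 1 x

end DyadicCube

open DyadicCube

namespace DyadicHelp
open DyadicCube
variable {d : ℕ}

lemma toSet_eq_pi (Q : DyadicCube d) :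
    Q.toSet = Set.univ.pi (fun i => Set.Ico ((Q.pos i : ℝ) * (2:ℝ) ^ (-Q.gen))
      (((Q.pos i : ℝ) + 1) * (2:ℝ) ^ (-Q.gen))) := by
  ext y; simp [DyadicCube.toSet, Set.mem_pi, Set.mem_Ico]

lemma measurableSet_toSet (Q : DyadicCube d) : MeasurableSet Q.toSet := by
  rw [toSet_eq_pi]
  exact MeasurableSet.univ_pi (fun i => measurableSet_Ico)

lemma vol_eq (Q : DyadicCube d) :
    Q.vol = (ENNReal.ofReal ((2:ℝ) ^ (-Q.gen))) ^ d := by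
  rw [DyadicCube.vol, toSet_eq_pi, MeasureTheory.volume_pi_pi]
  have : ∀ i : Fin d, volume (Set.Ico ((Q.pos i : ℝ) * (2:ℝ) ^ (-Q.gen))
      (((Q.pos i : ℝ) + 1) * (2:ℝ) ^ (-Q.gen))) = ENNReal.ofReal ((2:ℝ) ^ (-Q.gen)) := by
    intro i
    rw [Real.volume_Ico]
    congr 1
    ring
  rw [Finset.prod_congr rfl (fun i _ => this i), Finset.prod_const, Finset.card_univ,
    Fintype.card_fin]

lemma vol_ne_zero (Q : DyadicCube d) : Q.vol ≠ 0 := by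
  rw [vol_eq]
  apply pow_ne_zero
  simp only [ne_eq, ENNReal.ofReal_eq_zero, not_le]
  positivity

lemma vol_ne_top (Q : DyadicCube d) : Q.vol ≠ ⊤ := by
  rw [vol_eq]
  exact ENNReal.pow_ne_top ENNReal.ofReal_ne_top

lemma vol_toReal_pos (Q : DyadicCube d) : 0 < (Q.vol).toReal :=
  ENNReal.toReal_pos (vol_ne_zero Q) (vol_ne_top Q)

lemma avgR_nonneg (Q : DyadicCube d) {f : (Fin d → ℝ) → ℝ} (hf : ∀ x, 0 ≤ f x) :
    0 ≤ Q.avgR f :=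
  div_nonneg (MeasureTheory.setIntegral_nonneg (measurableSet_toSet Q) (fun y _ => hf y))
    ENNReal.toReal_nonneg

/-- The dyadic cube of generation `g` containing `x`. -/
def cubeOf (g : ℤ) (x : Fin d → ℝ) : DyadicCube d := ⟨g, fun i => ⌊x i * (2:ℝ) ^ g⌋⟩

lemma two_zpow_pos (g : ℤ) : (0:ℝ) < (2:ℝ) ^ g := zpow_pos (by norm_num) g

lemma mem_toSet_iff (Q : DyadicCube d) (x : Fin d → ℝ) :
    x ∈ Q.toSet ↔ ∀ i, (Q.pos i : ℝ) ≤ x i * (2:ℝ) ^ Q.gen ∧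
      x i * (2:ℝ) ^ Q.gen < (Q.pos i : ℝ) + 1 := by
  have h2 : (0:ℝ) < (2:ℝ) ^ Q.gen := two_zpow_pos _
  constructor
  · intro hx i
    obtain ⟨h1, h2'⟩ := hx i
    rw [zpow_neg] at h1 h2'
    constructor
    · calc (Q.pos i : ℝ) = (Q.pos i : ℝ) * ((2:ℝ)^Q.gen)⁻¹ * (2:ℝ)^Q.gen := by
            field_simp
        _ ≤ x i * (2:ℝ)^Q.gen := by
            exact mul_le_mul_of_nonneg_right h1 (le_of_lt h2)
    · calc x i * (2:ℝ)^Q.gen < ((Q.pos i : ℝ) + 1) * ((2:ℝ)^Q.gen)⁻¹ * (2:ℝ)^Q.gen := by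
            exact mul_lt_mul_of_pos_right h2' h2
        _ = (Q.pos i : ℝ) + 1 := by field_simp
  · intro hx i
    obtain ⟨h1, h2'⟩ := hx i
    rw [zpow_neg]
    constructor
    · rw [mul_inv_le_iff₀ h2]; exact h1
    · rw [lt_mul_inv_iff₀ h2]; exact h2'

lemma mem_cubeOf (g : ℤ) (x : Fin d → ℝ) : x ∈ (cubeOf g x).toSet := by
  rw [mem_toSet_iff]
  intro i
  exact ⟨Int.floor_le _, Int.lt_floor_add_one _⟩

lemma eq_cubeOf_of_mem {Q : DyadicCube d} {x : Fin d → ℝ} (hx : x ∈ Q.toSet) :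
    Q = cubeOf Q.gen x := by
  rw [mem_toSet_iff] at hx
  obtain ⟨g, p⟩ := Q
  simp only [cubeOf, DyadicCube.mk.injEq, true_and]
  funext i
  exact ((Int.floor_eq_iff).mpr ⟨(hx i).1, (hx i).2⟩).symm

lemma toSet_eq_of_gen_eq {Q Q' : DyadicCube d} {x : Fin d → ℝ}
    (hg : Q.gen = Q'.gen) (hx : x ∈ Q.toSet) (hx' : x ∈ Q'.toSet) : Q = Q' := by
  rw [eq_cubeOf_of_mem hx, eq_cubeOf_of_mem hx', hg]

lemma parent_cubeOf (g : ℤ) (x : Fin d → ℝ) :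
    parent (cubeOf g x) = cubeOf (g - 1) x := by
  simp only [parent, cubeOf, DyadicCube.mk.injEq, true_and]
  funext i
  have hd : Int.fdiv ⌊x i * (2:ℝ)^g⌋ 2 = ⌊x i * (2:ℝ)^g⌋ / 2 :=
    Int.fdiv_eq_ediv_of_nonneg _ (by norm_num)
  set p := ⌊x i * (2:ℝ)^g⌋ with hp
  have h1 : (p:ℝ) ≤ x i * (2:ℝ)^g := Int.floor_le _
  have h2 : x i * (2:ℝ)^g < (p:ℝ) + 1 := Int.lt_floor_add_one _
  have hfd : 2 * (p / 2) ≤ p ∧ p < 2 * (p / 2) + 2 := by omega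
  rw [hd]
  symm
  rw [Int.floor_eq_iff]
  have hgg : (2:ℝ)^(g-1) = (2:ℝ)^g / 2 := by
    rw [zpow_sub₀ (by norm_num : (2:ℝ) ≠ 0)]; norm_num
  have hx2 : x i * (2:ℝ)^(g-1) = (x i * (2:ℝ)^g) / 2 := by rw [hgg]; ring
  rw [hx2]
  constructor
  · have : ((2 * (p/2) : ℤ) : ℝ) ≤ (p:ℝ) := by exact_mod_cast hfd.1
    push_cast at this ⊢
    linarith
  · have : ((p:ℝ)) + 1 ≤ ((2 * (p/2) + 2 : ℤ) : ℝ) := by exact_mod_cast hfd.2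
    push_cast at this ⊢
    linarith

lemma ancestor_cubeOf (n : ℕ) (g : ℤ) (x : Fin d → ℝ) :
    ancestor n (cubeOf (g + n) x) = cubeOf g x := by
  induction n with
  | zero => simp [ancestor]
  | succ n ih =>
    have : ancestor (n+1) (cubeOf (g + (n+1 : ℕ)) x)
        = ancestor n (parent (cubeOf (g + (n+1:ℕ)) x)) := by
      rw [ancestor, Function.iterate_succ_apply, ancestor]
    rw [this, parent_cubeOf]
    have : (g + ((n:ℤ)+1) - 1) = g + (n:ℕ) := by push_cast; ring
    rw [show ((n+1 : ℕ) : ℤ) = (n:ℤ) + 1 by push_cast; ring, this, ih]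

lemma toSet_subset_parent (Q : DyadicCube d) : Q.toSet ⊆ (parent Q).toSet := by
  intro y hy
  rw [mem_toSet_iff] at hy ⊢
  intro i
  obtain ⟨h1, h2⟩ := hy i
  simp only [parent]
  set p := Q.pos i with hp
  have hfd : 2 * (p / 2) ≤ p ∧ p < 2 * (p / 2) + 2 := by omega
  have hd : Int.fdiv p 2 = p / 2 := Int.fdiv_eq_ediv_of_nonneg _ (by norm_num)
  have hgg : (2:ℝ)^(Q.gen-1) = (2:ℝ)^Q.gen / 2 := by
    rw [zpow_sub₀ (by norm_num : (2:ℝ) ≠ 0)]; norm_num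
  have hy2 : y i * (2:ℝ)^(Q.gen-1) = (y i * (2:ℝ)^Q.gen) / 2 := by rw [hgg]; ring
  rw [hd, hy2]
  have c1 : ((2 * (p/2) : ℤ) : ℝ) ≤ (p:ℝ) := by exact_mod_cast hfd.1
  have c2 : ((p:ℝ)) + 1 ≤ ((2 * (p/2) + 2 : ℤ) : ℝ) := by exact_mod_cast hfd.2
  push_cast at c1 c2 ⊢
  constructor
  · linarith
  · linarith

lemma toSet_subset_ancestor (n : ℕ) (Q : DyadicCube d) :
    Q.toSet ⊆ (ancestor n Q).toSet := by
  induction n generalizing Q with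
  | zero => simp [ancestor]
  | succ n ih =>
    rw [ancestor, Function.iterate_succ_apply]
    exact (toSet_subset_parent Q).trans (ih (parent Q))

lemma ancestor_gen (n : ℕ) (Q : DyadicCube d) : (ancestor n Q).gen = Q.gen - n := by
  induction n generalizing Q with
  | zero => simp [ancestor]
  | succ n ih =>
    rw [ancestor, Function.iterate_succ_apply]
    have := ih (parent Q)
    rw [ancestor] at this
    rw [this]
    simp only [parent]
    push_cast
    ring

lemma In_refl (Q : DyadicCube d) : Q.In Q := ⟨le_refl _, subset_rfl⟩

lemma In_trans {Q R S : DyadicCube d} (h1 : Q.In R) (h2 : R.In S) : Q.In S :=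
  ⟨h2.1.trans h1.1, h1.2.trans h2.2⟩

end DyadicHelp

/-- pointwise bound produced by the domination algorithm: with `γ_Q`
dominating the `α`-values of the `m`-th generation subcubes of `Q`, `β_Q ∈ {0, 2^{2(k+1)}C_W}`
chosen according to the sign of `Δ_Q − (∏⟨f_i⟩_Q)γ_Q`, and the memory recursion
`Δ_R = Δ_Q + (β_Q − α_R)∏⟨f_i⟩_Q` for `R ∈ 𝒟_m(Q)`, starting from `Δ_{P₀} = 0`, one has
`𝒜^{m;0}_{P₀,α} f⃗(x) ≤ Σ_Q β_Q (∏⟨f_i⟩_Q) 1_Q(x)` on `P₀`, provided `α` is a finitely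
supported Carleson sequence of constant `1` supported on generations that are multiples
of `m`. -/
theorem algorithm_pointwise_bound {d k : ℕ} (hk : 0 < k) (m : ℕ) (hm : 1 ≤ m)
    (P₀ : DyadicCube d)
    (f : Fin k → (Fin d → ℝ) → ℝ) (hf : ∀ i x, 0 ≤ f i x)
    (hfint : ∀ i, IntegrableOn (f i) P₀.toSet volume)
    (α β γ Δ : DyadicCube d → ℝ) (CW : ℝ) (hCW : 1 ≤ CW)
    (hα0 : ∀ Q, 0 ≤ α Q)
    (hαCar : CarlesonR P₀ α 1)
    (hαfin : {Q : DyadicCube d | α Q ≠ 0}.Finite)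
    (hαsupp : ∀ Q : DyadicCube d, α Q ≠ 0 →
      Q.In P₀ ∧ (m : ℤ) ∣ (Q.gen - P₀.gen))
    (hγ0 : ∀ Q, 0 ≤ γ Q)
    (hγ : ∀ Q R : DyadicCube d, R.In Q → R.gen = Q.gen + m → α R ≤ γ Q)
    (hβ : ∀ Q : DyadicCube d,
      (0 ≤ Δ Q - (∏ i, Q.avgR (f i)) * γ Q → β Q = 0) ∧
      (¬ 0 ≤ Δ Q - (∏ i, Q.avgR (f i)) * γ Q → β Q = 2 ^ (2 * (k + 1)) * CW))
    (hΔ0 : Δ P₀ = 0)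
    (hrec : ∀ Q R : DyadicCube d, Q.In P₀ → (m : ℤ) ∣ (Q.gen - P₀.gen) →
      R.In Q → R.gen = Q.gen + m →
      Δ R = Δ Q + (β Q - α R) * ∏ i, Q.avgR (f i)) :
    ∀ x ∈ P₀.toSet,
      ENNReal.ofReal (slicedShiftR P₀ α m f x) ≤
        ∑' Q : {Q : DyadicCube d // Q.In P₀},
          (Q : DyadicCube d).toSet.indicator
            (fun _ => ENNReal.ofReal (β Q.1 * ∏ i, (Q : DyadicCube d).avgR (f i))) x := by
  classical
  intro x hx
  -- the chain of cubes containing x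
  let c : ℕ → DyadicCube d := fun j => DyadicHelp.cubeOf (P₀.gen + (j : ℤ) * m) x
  have hcgen : ∀ j : ℕ, (c j).gen = P₀.gen + (j:ℤ) * m := fun j => rfl
  have hcmem : ∀ j : ℕ, x ∈ (c j).toSet := fun j => DyadicHelp.mem_cubeOf _ x
  have hc0 : c 0 = P₀ := by
    have h := DyadicHelp.eq_cubeOf_of_mem hx
    show DyadicHelp.cubeOf (P₀.gen + (0:ℤ) * m) x = P₀
    rw [show P₀.gen + (0:ℤ) * m = P₀.gen by ring]
    exact h.symm
  have hanc : ∀ j : ℕ, ancestor m (c (j+1)) = c j := by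
    intro j
    have h := DyadicHelp.ancestor_cubeOf m (P₀.gen + (j:ℤ) * m) x
    show ancestor m (DyadicHelp.cubeOf (P₀.gen + ((j:ℕ)+1 : ℕ) * m) x) = c j
    rw [show (P₀.gen + (((j:ℕ)+1 : ℕ) : ℤ) * m) = (P₀.gen + (j:ℤ)*m) + (m:ℤ) by push_cast; ring]
    exact h
  have hInstep : ∀ j : ℕ, (c (j+1)).In (c j) := by
    intro j
    constructor
    · rw [hcgen, hcgen]
      have : (j:ℤ) * m ≤ ((j:ℕ)+1 : ℤ) * m := by
        have hm0 : (0:ℤ) ≤ m := by positivity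
        nlinarith
      push_cast
      linarith
    · rw [← hanc j]
      exact DyadicHelp.toSet_subset_ancestor m _
  have hIn : ∀ j : ℕ, (c j).In P₀ := by
    intro j
    induction j with
    | zero => rw [hc0]; exact DyadicHelp.In_refl P₀
    | succ n ih => exact DyadicHelp.In_trans (hInstep n) ih
  have hdvd : ∀ j : ℕ, (m:ℤ) ∣ ((c j).gen - P₀.gen) := by
    intro j
    refine ⟨j, ?_⟩
    rw [hcgen]; ring
  have hgenstep : ∀ j : ℕ, (c (j+1)).gen = (c j).gen + m := by
    intro j; rw [hcgen, hcgen]; push_cast; ring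
  -- products of averages are nonnegative
  have hPnn : ∀ Q : DyadicCube d, 0 ≤ ∏ i, Q.avgR (f i) := fun Q =>
    Finset.prod_nonneg fun i _ => DyadicHelp.avgR_nonneg Q (hf i)
  -- β is nonnegative
  have hβnn : ∀ Q : DyadicCube d, 0 ≤ β Q := by
    intro Q
    rcases le_or_gt 0 (Δ Q - (∏ i, Q.avgR (f i)) * γ Q) with h | h
    · rw [(hβ Q).1 h]
    · rw [(hβ Q).2 (not_le.mpr h)]
      positivity
  have h1β : (1:ℝ) ≤ 2 ^ (2 * (k + 1)) * CW := by
    have h2 : (1:ℝ) ≤ 2 ^ (2 * (k + 1)) := one_le_pow₀ (by norm_num)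
    nlinarith
  -- every α value on cubes inside P₀ is at most 1
  have halle : ∀ Q : DyadicCube d, Q.In P₀ → α Q ≤ 1 := by
    intro Q hQ
    have hcar := hαCar Q hQ
    set F : {R : DyadicCube d // R.In Q} → ℝ := fun R => α R.1 * (R.1.vol).toReal with hF
    have hsupp : {R : {R : DyadicCube d // R.In Q} | F R ≠ 0}.Finite := by
      apply Set.Finite.subset (hαfin.preimage (Subtype.val_injective.injOn))
      intro R hR
      simp only [Set.mem_setOf_eq, Set.mem_preimage]
      intro h0
      exact hR (by rw [hF]; simp [h0])
    have hzero : ∀ R ∉ hsupp.toFinset, F R = 0 := by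
      intro R hR
      by_contra h
      exact hR (hsupp.mem_toFinset.mpr h)
    have hsum : Summable F := summable_of_ne_finset_zero hzero
    have hle := Summable.le_tsum hsum ⟨Q, DyadicHelp.In_refl Q⟩
      (fun R _ => mul_nonneg (hα0 _) ENNReal.toReal_nonneg)
    have : α Q * (Q.vol).toReal ≤ 1 * (Q.vol).toReal := le_trans hle hcar
    exact le_of_mul_le_mul_right (by linarith) (DyadicHelp.vol_toReal_pos Q)
  -- the recursion along the chain
  have hΔc : ∀ j : ℕ, Δ (c (j+1)) = Δ (c j) + (β (c j) - α (c (j+1))) * ∏ i, (c j).avgR (f i) :=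
    fun j => hrec (c j) (c (j+1)) (hIn j) (hdvd j) (hInstep j) (hgenstep j)
  -- Δ stays nonnegative along the chain
  have hΔnn : ∀ j : ℕ, 0 ≤ Δ (c j) := by
    intro j
    induction j with
    | zero => rw [hc0, hΔ0]
    | succ n ih =>
      rw [hΔc n]
      have hαγ : α (c (n+1)) ≤ γ (c n) := hγ (c n) (c (n+1)) (hInstep n) (hgenstep n)
      have hPn := hPnn (c n)
      rcases le_or_gt 0 (Δ (c n) - (∏ i, (c n).avgR (f i)) * γ (c n)) with h | h
      · rw [(hβ (c n)).1 h]
        nlinarith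
      · rw [(hβ (c n)).2 (not_le.mpr h)]
        have hα1 : α (c (n+1)) ≤ 1 := halle _ (hIn (n+1))
        nlinarith
  -- telescoping identity
  have htel : ∀ n : ℕ,
      ∑ j ∈ Finset.range n, (β (c j) - α (c (j+1))) * ∏ i, (c j).avgR (f i) = Δ (c n) := by
    intro n
    induction n with
    | zero => simp [hc0, hΔ0]
    | succ n ih => rw [Finset.sum_range_succ, ih, hΔc n]
  -- analyze the left-hand side tsum
  set F : {Q : DyadicCube d // Q.In P₀ ∧ ∃ j : ℕ, 1 ≤ j ∧ Q.gen = P₀.gen + j * m} → ℝ :=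
    fun Q => α Q.1 * (∏ i, (ancestor m Q.1).avgR (f i)) * Q.1.toSet.indicator 1 x with hF
  have hFsupp : {Q | F Q ≠ 0}.Finite := by
    apply Set.Finite.subset (hαfin.preimage (Subtype.val_injective.injOn))
    intro Q hQ
    simp only [Set.mem_setOf_eq, Set.mem_preimage]
    intro h0
    exact hQ (by rw [hF]; simp [h0])
  set s := hFsupp.toFinset with hs
  have htsum : slicedShiftR P₀ α m f x = ∑ Q ∈ s, F Q := by
    apply tsum_eq_sum
    intro Q hQ
    by_contra h
    exact hQ (hFsupp.mem_toFinset.mpr h)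
  have hsmem : ∀ Q ∈ s, x ∈ Q.1.toSet := by
    intro Q hQ
    have := hFsupp.mem_toFinset.mp hQ
    by_contra h
    apply this
    rw [hF]
    simp [Set.indicator_of_notMem h]
  -- the index map
  set jm : {Q : DyadicCube d // Q.In P₀ ∧ ∃ j : ℕ, 1 ≤ j ∧ Q.gen = P₀.gen + j * m} → ℕ :=
    fun Q => ((Q.1.gen - P₀.gen).toNat) / m with hjm
  have hkey : ∀ Q, x ∈ Q.1.toSet → 1 ≤ jm Q ∧ Q.1 = c (jm Q) := by
    intro Q hxQ
    obtain ⟨j, hj1, hjg⟩ := Q.2.2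
    have hjmQ : jm Q = j := by
      rw [hjm]
      simp only
      rw [hjg]
      rw [show P₀.gen + (j:ℤ) * m - P₀.gen = ((j * m : ℕ) : ℤ) by push_cast; ring]
      rw [Int.toNat_natCast]
      exact Nat.mul_div_cancel _ hm
    rw [hjmQ]
    refine ⟨hj1, ?_⟩
    apply DyadicHelp.toSet_eq_of_gen_eq _ hxQ (hcmem j)
    rw [hjg, hcgen]
  -- reduce LHS to a sum over an initial segment of the chain
  set jm' : {Q : DyadicCube d // Q.In P₀ ∧ ∃ j : ℕ, 1 ≤ j ∧ Q.gen = P₀.gen + j * m} → ℕ :=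
    fun Q => jm Q - 1 with hjm'
  have hFval : ∀ Q ∈ s, F Q = α (c (jm' Q + 1)) * ∏ i, (c (jm' Q)).avgR (f i) := by
    intro Q hQ
    have hxQ := hsmem Q hQ
    obtain ⟨h1, h2⟩ := hkey Q hxQ
    have hj : jm' Q + 1 = jm Q := by
      show jm Q - 1 + 1 = jm Q
      omega
    rw [hF]
    simp only
    rw [Set.indicator_of_mem hxQ, Pi.one_apply, mul_one, h2,
      show jm Q = jm' Q + 1 from hj.symm, hanc (jm' Q)]
  have hinj : ∀ Q ∈ s, ∀ Q' ∈ s, jm' Q = jm' Q' → Q = Q' := by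
    intro Q hQ Q' hQ'
    obtain ⟨h1, h2⟩ := hkey Q (hsmem Q hQ)
    obtain ⟨h1', h2'⟩ := hkey Q' (hsmem Q' hQ')
    intro he
    have he2 : jm Q - 1 = jm Q' - 1 := he
    have : jm Q = jm Q' := by omega
    apply Subtype.ext
    rw [h2, h2', this]
  set N : ℕ := (s.image jm').sup id + 1 with hN
  have hsub : s.image jm' ⊆ Finset.range N := by
    intro j hj
    rw [Finset.mem_range, hN]
    exact Nat.lt_succ_of_le (Finset.le_sup (f := id) hj)
  have hchain : ∀ j : ℕ, 0 ≤ α (c (j+1)) * ∏ i, (c j).avgR (f i) := fun j =>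
    mul_nonneg (hα0 _) (hPnn _)
  have hstep1 : slicedShiftR P₀ α m f x ≤
      ∑ j ∈ Finset.range N, α (c (j+1)) * ∏ i, (c j).avgR (f i) := by
    rw [htsum]
    calc ∑ Q ∈ s, F Q
        = ∑ j ∈ s.image jm', α (c (j+1)) * ∏ i, (c j).avgR (f i) := by
          rw [Finset.sum_image hinj]
          exact (Finset.sum_congr rfl hFval)
      _ ≤ ∑ j ∈ Finset.range N, α (c (j+1)) * ∏ i, (c j).avgR (f i) :=
          Finset.sum_le_sum_of_subset_of_nonneg hsub (fun j _ _ => hchain j)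
  have hstep2 : ∑ j ∈ Finset.range N, α (c (j+1)) * ∏ i, (c j).avgR (f i) ≤
      ∑ j ∈ Finset.range N, β (c j) * ∏ i, (c j).avgR (f i) := by
    have heq : ∑ j ∈ Finset.range N, β (c j) * ∏ i, (c j).avgR (f i)
        - ∑ j ∈ Finset.range N, α (c (j+1)) * ∏ i, (c j).avgR (f i) = Δ (c N) := by
      rw [← Finset.sum_sub_distrib, ← htel N]
      apply Finset.sum_congr rfl
      intros j _
      ring
    have := hΔnn N
    linarith
  -- pass to the right-hand side
  set e : ℕ → {Q : DyadicCube d // Q.In P₀} := fun j => ⟨c j, hIn j⟩ with he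
  have heinj : ∀ j ∈ Finset.range N, ∀ j' ∈ Finset.range N, e j = e j' → j = j' := by
    intro j _ j' _ h
    have hg : (c j).gen = (c j').gen := by rw [Subtype.mk.injEq] at h; rw [h]
    rw [hcgen, hcgen] at hg
    have hmZ : (m:ℤ) ≠ 0 := by positivity
    have : (j:ℤ) = j' := by
      have h' : (j:ℤ) * m = (j':ℤ) * m := by linarith
      exact mul_right_cancel₀ hmZ h'
    exact_mod_cast this
  calc ENNReal.ofReal (slicedShiftR P₀ α m f x)
      ≤ ENNReal.ofReal (∑ j ∈ Finset.range N, β (c j) * ∏ i, (c j).avgR (f i)) :=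
        ENNReal.ofReal_le_ofReal (le_trans hstep1 hstep2)
    _ = ∑ j ∈ Finset.range N, ENNReal.ofReal (β (c j) * ∏ i, (c j).avgR (f i)) :=
        ENNReal.ofReal_sum_of_nonneg (fun j _ => mul_nonneg (hβnn _) (hPnn _))
    _ = ∑ Q ∈ (Finset.range N).image e,
          Q.1.toSet.indicator (fun _ => ENNReal.ofReal (β Q.1 * ∏ i, Q.1.avgR (f i))) x := by
        rw [Finset.sum_image heinj]
        apply Finset.sum_congr rfl
        intro j _
        rw [Set.indicator_of_mem (hcmem j)]
    _ ≤ ∑' Q : {Q : DyadicCube d // Q.In P₀},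
          (Q : DyadicCube d).toSet.indicator
            (fun _ => ENNReal.ofReal (β Q.1 * ∏ i, (Q : DyadicCube d).avgR (f i))) x :=
        ENNReal.sum_le_tsum _
end
end

section
/- Weighted weak-type bound transfer for square-root sparse operators yields the sharp aperture estimate for 1<p<2: if for every sparse collection 𝒮 one has ‖(𝒜⁰_𝒮(f,f))^{1/2}‖_{L^{p,∞}(w)} ≤ C [w]_{A_p}^{max(1/2,1/p)} ‖f‖_{L^p(w)}, and S̃_{α,ψ}f satisfies the pointwise bound (S̃_{α,ψ}f(x))² ≲ α^{2d} Σ_{finite set of grids} Σ_{Q∈𝒮} ⟨|f|⟩_Q² 1_Q(x) for sparse families 𝒮, then ‖S̃_{α,ψ}f‖_{L^{p,∞}(w)} ≲ α^d [w]_{A_p}^{1/p} ‖f‖_{L^p(w)} for 1 < p < 2. -/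
open MeasureTheory ENNReal Set
noncomputable section

open DyadicCube

/-- The weighted weak `L^{p,∞}(w)` quasi-norm `sup_λ λ w({g > λ})^{1/p}`. -/
noncomputable def wnorm {d : ℕ} (g : (Fin d → ℝ) → ℝ≥0∞) (p : ℝ)
    (w : (Fin d → ℝ) → ℝ≥0∞) : ℝ≥0∞ :=
  ⨆ lam : ℝ≥0∞, lam * (∫⁻ x in {y | lam < g y}, w x) ^ (1 / p)

/-- The squared sparse operator `𝒜⁰_𝒮(f,f)(x) = Σ_{Q∈𝒮} ⟨f⟩_Q² 1_Q(x)`. -/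
noncomputable def sparseSq {d : ℕ} (S : Set (DyadicCube d))
    (f : (Fin d → ℝ) → ℝ≥0∞) (x : Fin d → ℝ) : ℝ≥0∞ :=
  ∑' Q : S, ((Q : DyadicCube d).avg f) ^ 2 * (Q : DyadicCube d).toSet.indicator 1 x

/-!
Taking square roots in the pointwise bound and using subadditivity of `√·` on finite sums gives
`S̃f ≤ c^{1/2} α^d ∑_{j<N} (𝒜⁰_{𝒮_j}(f,f))^{1/2}`. The weak quasi-norm is homogeneous and, for
`p ≥ 1`, satisfies `‖∑_{j<N} g_j‖_{L^{p,∞}(w)} ≤ N ∑_j ‖g_j‖_{L^{p,∞}(w)}` (the level set of the sum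
at height `λ` lies in the union of those of the `g_j` at height `λ / N`). Since `p < 2` the sparse
bound carries the power `[w]^{1/p}`, and the claim follows with `C' = N² c^{1/2} C + 1`.
-/

namespace ENNReal

theorem rpow_finsetSum_le_sum_rpow {ι : Type*} (s : Finset ι) (a : ι → ℝ≥0∞) {r : ℝ}
    (hr0 : 0 < r) (hr1 : r ≤ 1) : (∑ i ∈ s, a i) ^ r ≤ ∑ i ∈ s, a i ^ r :=
  Finset.le_sum_of_subadditive (· ^ r) (by simp [zero_rpow_of_pos hr0])
    (fun x y => rpow_add_le_add_rpow x y hr0.le hr1) s a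

theorem le_mul_sum_sqrt_of_sq_le_mul_sum {ι : Type*} {a b : ℝ≥0∞} (s : Finset ι)
    (t : ι → ℝ≥0∞) (h : a ^ 2 ≤ b ^ 2 * ∑ i ∈ s, t i) :
    a ≤ b * ∑ i ∈ s, t i ^ (1 / 2 : ℝ) := by
  have sqrt_sq : ∀ x : ℝ≥0∞, (x ^ 2) ^ (1 / 2 : ℝ) = x := fun x => by
    rw [← rpow_natCast, ← rpow_mul]; norm_num
  calc a = (a ^ 2) ^ (1 / 2 : ℝ) := (sqrt_sq a).symm
    _ ≤ (b ^ 2 * ∑ i ∈ s, t i) ^ (1 / 2 : ℝ) := rpow_le_rpow h (by norm_num)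
    _ = b * (∑ i ∈ s, t i) ^ (1 / 2 : ℝ) := by
      rw [mul_rpow_of_nonneg _ _ (by norm_num), sqrt_sq]
    _ ≤ b * ∑ i ∈ s, t i ^ (1 / 2 : ℝ) := by
      gcongr; exact rpow_finsetSum_le_sum_rpow s t (by norm_num) (by norm_num)

end ENNReal

section WeakNorm

variable {d : ℕ} {p : ℝ} {w : (Fin d → ℝ) → ℝ≥0∞}

theorem wnorm_mono {g h : (Fin d → ℝ) → ℝ≥0∞} (hp : 0 ≤ p) (hgh : ∀ x, g x ≤ h x) :
    wnorm g p w ≤ wnorm h p w :=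
  iSup_mono fun lam => by
    gcongr with y
    exact hgh y

theorem wnorm_const_mul_le {K : ℝ≥0∞} (g : (Fin d → ℝ) → ℝ≥0∞) (hp : 0 < p) (hK : K ≠ ⊤) :
    wnorm (fun x => K * g x) p w ≤ K * wnorm g p w := by
  refine iSup_le fun lam => ?_
  rcases eq_or_ne K 0 with rfl | hK0
  · simp [hp]
  have level_set : {y | lam < K * g y} = {y | lam / K < g y} := by
    ext y; simp [ENNReal.div_lt_iff (Or.inl hK0) (Or.inl hK), mul_comm]
  calc lam * (∫⁻ x in {y | lam < K * g y}, w x) ^ (1 / p)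
      = K * (lam / K * (∫⁻ x in {y | lam / K < g y}, w x) ^ (1 / p)) := by
        rw [level_set, ← mul_assoc, ENNReal.mul_div_cancel hK0 hK]
    _ ≤ K * wnorm g p w := by
      gcongr
      exact le_iSup (fun l => l * (∫⁻ x in {y | l < g y}, w x) ^ (1 / p)) (lam / K)

theorem wnorm_sum_le {ι : Type*} [Fintype ι] (g : ι → (Fin d → ℝ) → ℝ≥0∞) (hp : 1 ≤ p) :
    wnorm (fun x => ∑ j, g j x) p w ≤ Fintype.card ι * ∑ j, wnorm (g j) p w := by
  refine iSup_le fun lam => ?_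
  rcases isEmpty_or_nonempty ι with _ | _
  · simp [one_pos.trans_le hp]
  set n : ℝ≥0∞ := (Fintype.card ι : ℝ≥0∞)
  have hn0 : n ≠ 0 := by simp [n]
  have hnt : n ≠ ⊤ := natCast_ne_top _
  have level_set_subset : {y | lam < ∑ j, g j y} ⊆ ⋃ j, {y | lam / n < g j y} := by
    intro x hx
    by_contra! hsmall
    simp only [mem_iUnion, mem_ofPred_eq, not_exists, not_lt] at hsmall
    have : ∑ j, g j x ≤ lam :=
      calc ∑ j, g j x ≤ Finset.univ.card • (lam / n) :=
            Finset.sum_le_card_nsmul _ _ _ fun j _ => hsmall j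
        _ = n * (lam / n) := by rw [nsmul_eq_mul, Finset.card_univ]
        _ ≤ lam := ENNReal.mul_div_le
    exact not_lt_of_ge this hx
  calc lam * (∫⁻ x in {y | lam < ∑ j, g j y}, w x) ^ (1 / p)
      ≤ lam * (∑ j, ∫⁻ x in {y | lam / n < g j y}, w x) ^ (1 / p) := by
        gcongr
        exact (lintegral_mono_set level_set_subset).trans
          ((lintegral_iUnion_le _ _).trans_eq (tsum_fintype _))
    _ ≤ lam * ∑ j, (∫⁻ x in {y | lam / n < g j y}, w x) ^ (1 / p) := by
        gcongr
        exact rpow_finsetSum_le_sum_rpow _ _ (by positivity) (by rw [div_le_one] <;> linarith)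
    _ = n * ∑ j, lam / n * (∫⁻ x in {y | lam / n < g j y}, w x) ^ (1 / p) := by
        rw [Finset.mul_sum, Finset.mul_sum]
        simp only [← mul_assoc, ENNReal.mul_div_cancel hn0 hnt]
    _ ≤ n * ∑ j, wnorm (g j) p w := by
        gcongr with j
        exact le_iSup (fun l => l * (∫⁻ x in {y | l < g j y}, w x) ^ (1 / p)) (lam / n)

end WeakNorm

/-- transfer of the weighted weak-type bound for square roots of sparse
square operators: if `‖(𝒜⁰_𝒮(f,f))^{1/2}‖_{L^{p,∞}(w)} ≤ C [w]^{max(1/2,1/p)} ‖f‖_{L^p(w)}`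
for every sparse `𝒮`, and the (regularized) square function satisfies the pointwise bound
`(S̃f)² ≲ α^{2d} Σ_{grids} Σ_{Q∈𝒮} ⟨f⟩_Q² 1_Q`, then
`‖S̃f‖_{L^{p,∞}(w)} ≲ α^d [w]^{1/p} ‖f‖_{L^p(w)}` for `1 < p < 2`. -/
theorem aperture_transfer (d N : ℕ) (p : ℝ) (hp1 : 1 < p) (hp2 : p < 2)
    (C c : ℝ≥0∞) (hC : C < ⊤) (hc : c < ⊤) :
    ∃ C' : ℝ≥0∞, 0 < C' ∧ C' < ⊤ ∧
      ∀ (w : (Fin d → ℝ) → ℝ≥0∞) (Aw : ℝ≥0∞), 1 ≤ Aw →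
      ∀ (α : ℝ), 0 < α →
      ∀ Sq : ((Fin d → ℝ) → ℝ≥0∞) → (Fin d → ℝ) → ℝ≥0∞,
        (∀ S : Set (DyadicCube d), Sparse (1 / 2) S →
          ∀ f : (Fin d → ℝ) → ℝ≥0∞,
            wnorm (fun x => (sparseSq S f x) ^ (1 / 2 : ℝ)) p w ≤
              C * Aw ^ max (1 / 2 : ℝ) (1 / p) * (∫⁻ x, f x ^ p * w x) ^ (1 / p)) →
        (∀ f : (Fin d → ℝ) → ℝ≥0∞, ∃ S : Fin N → Set (DyadicCube d),
          (∀ j, Sparse (1 / 2) (S j)) ∧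
          ∀ x, (Sq f x) ^ 2 ≤
            c * ENNReal.ofReal (α ^ (2 * d)) * ∑ j, sparseSq (S j) f x) →
        ∀ f : (Fin d → ℝ) → ℝ≥0∞,
          wnorm (Sq f) p w ≤
            C' * ENNReal.ofReal (α ^ d) * Aw ^ (1 / p) *
              (∫⁻ x, f x ^ p * w x) ^ (1 / p) := by
  have hp0 : 0 < p := one_pos.trans hp1
  have hmax : max (1 / 2 : ℝ) (1 / p) = 1 / p :=
    max_eq_right (one_div_le_one_div_of_le hp0 hp2.le)
  have hc_sqrt : c ^ (1 / 2 : ℝ) ≠ ⊤ := (rpow_lt_top_of_nonneg (by norm_num) hc.ne).ne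
  refine ⟨(N : ℝ≥0∞) ^ 2 * c ^ (1 / 2 : ℝ) * C + 1, by positivity, ?_, ?_⟩
  · exact add_lt_top.2 ⟨mul_lt_top (mul_lt_top (by simp) hc_sqrt.lt_top) hC, one_lt_top⟩
  intro w Aw _ α hα Sq hsparse hpt f
  obtain ⟨S, hS, hSq⟩ := hpt f
  set B := ENNReal.ofReal (α ^ d)
  set K := c ^ (1 / 2 : ℝ) * B
  set I := (∫⁻ x, f x ^ p * w x) ^ (1 / p)
  have hK_sq : K ^ 2 = c * ENNReal.ofReal (α ^ (2 * d)) := by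
    rw [mul_pow, ← rpow_natCast, ← rpow_mul, ← ofReal_pow (pow_nonneg hα.le d), ← pow_mul,
      mul_comm d 2]
    norm_num
  have hpoint : ∀ x, Sq f x ≤ K * ∑ j, sparseSq (S j) f x ^ (1 / 2 : ℝ) := fun x =>
    le_mul_sum_sqrt_of_sq_le_mul_sum _ _ (hK_sq ▸ mul_assoc c _ _ ▸ hSq x)
  calc wnorm (Sq f) p w
      ≤ wnorm (fun x => K * ∑ j, sparseSq (S j) f x ^ (1 / 2 : ℝ)) p w := wnorm_mono hp0.le hpoint
    _ ≤ K * (N * ∑ j, wnorm (fun x => sparseSq (S j) f x ^ (1 / 2 : ℝ)) p w) := by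
        refine (wnorm_const_mul_le _ hp0 (mul_ne_top hc_sqrt ofReal_ne_top)).trans ?_
        gcongr
        simpa using wnorm_sum_le (fun j x => sparseSq (S j) f x ^ (1 / 2 : ℝ)) hp1.le
    _ ≤ K * (N * ∑ _j : Fin N, C * Aw ^ (1 / p) * I) := by
        gcongr with j
        simpa only [hmax] using hsparse (S j) (hS j) f
    _ = (N : ℝ≥0∞) ^ 2 * c ^ (1 / 2 : ℝ) * C * B * Aw ^ (1 / p) * I := by
        simp only [Finset.sum_const, Finset.card_univ, Fintype.card_fin, nsmul_eq_mul, K]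
        ring
    _ ≤ _ := by gcongr; exact le_self_add
end
end
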